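/- arXiv:2005.10566 — 2 statements merged into one kernel-verified Lean document; each statement's English description precedes it below -/
import Mathlib

section
/- Suppose 0 < ε < 1 and for every iteration t ≥ 0 and active vertex v, the freezing threshold satisfies T_{v,t} ∈ [1−4ε, 1−2ε], and edge weights of active edges are multiplied by 1/(1−ε) per iteration while frozen edges keep their weight. If at iteration t the fractional matching {x_{e,t}} is valid (∑_{e∋v} x_{e,t} ≤ w(v) for all v) and every active vertex v satisfies ∑_{e∋v} x_{e,t} < T_{v,t}·w(v), then {x_{e,t+1}} is also valid: ∑_{e∋v} x_{e,t+1} ≤ w(v) for all v. -/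
/-! An edge at an active vertex grows by at most the factor `1/(1-ε)`, so the load of an active
vertex grows from below `(1-2ε)·w(v)` to at most `(1-2ε)/(1-ε)·w(v) ≤ w(v)`. Every edge at a
frozen vertex is frozen, so the load of a frozen vertex does not change. -/

open Finset

lemma div_one_sub_le_of_le_mul {s T w ε : ℝ} (hε₀ : 0 ≤ ε) (hε₁ : ε < 1)
    (hT : T ≤ 1 - 2 * ε) (hw : 0 ≤ w) (hs : s ≤ T * w) : s / (1 - ε) ≤ w := by
  rw [div_le_iff₀ (by linarith)]
  nlinarith

section Update

variable {V : Type*} {G : SimpleGraph V} {Active : V → Prop} {x x' : Sym2 V → ℝ} {ε : ℝ}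

lemma update_le_div (hε₀ : 0 ≤ ε) (hε₁ : ε < 1) (hx_nonneg : ∀ e ∈ G.edgeSet, 0 ≤ x e)
    (hx'_active : ∀ u v : V, G.Adj u v → Active u → Active v →
      x' s(u, v) = x s(u, v) / (1 - ε))
    (hx'_frozen : ∀ u v : V, G.Adj u v → ¬(Active u ∧ Active v) → x' s(u, v) = x s(u, v))
    {e : Sym2 V} (he : e ∈ G.edgeSet) : x' e ≤ x e / (1 - ε) := by
  induction e using Sym2.ind with
  | _ a b =>
    by_cases hab : Active a ∧ Active b
    · exact (hx'_active a b he hab.1 hab.2).le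
    · rw [hx'_frozen a b he hab]
      exact le_div_self (hx_nonneg _ he) (by linarith) (by linarith)

lemma update_eq_of_not_active
    (hx'_frozen : ∀ u v : V, G.Adj u v → ¬(Active u ∧ Active v) → x' s(u, v) = x s(u, v))
    {v : V} (hv : ¬Active v) {e : Sym2 V} (he : e ∈ G.edgeSet) (hve : v ∈ e) : x' e = x e := by
  induction e using Sym2.ind with
  | _ a b =>
    refine hx'_frozen a b he fun hab => hv ?_
    rcases Sym2.mem_iff.mp hve with rfl | rfl
    exacts [hab.1, hab.2]

end Update

/-- One iteration of the primal-dual update preserves validity of the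
fractional matching: if every active vertex is strictly below its threshold
`T_v ∈ [1-4ε, 1-2ε]` times its weight, then after scaling all active edges
by `1/(1-ε)` (frozen edges unchanged) all dual constraints still hold. -/
theorem stmt_4 {V : Type*} [Fintype V] [DecidableEq V]
    (G : SimpleGraph V) [DecidableRel G.Adj]
    (w : V → ℝ) (hw : ∀ v, 0 < w v)
    (ε : ℝ) (hε : 0 < ε) (hε' : ε < 1)
    (T : V → ℝ) (hT : ∀ v, T v ∈ Set.Icc (1 - 4*ε) (1 - 2*ε))
    (Active : V → Prop) [DecidablePred Active]
    (x x' : Sym2 V → ℝ)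
    (hx_nonneg : ∀ e ∈ G.edgeFinset, 0 ≤ x e)
    (hx_valid : ∀ v : V, ∑ e ∈ G.edgeFinset.filter (fun e => v ∈ e), x e ≤ w v)
    (hactive : ∀ v : V, Active v →
      ∑ e ∈ G.edgeFinset.filter (fun e => v ∈ e), x e < T v * w v)
    (hx'_active : ∀ u v : V, G.Adj u v → Active u → Active v →
      x' s(u, v) = x s(u, v) / (1-ε))
    (hx'_frozen : ∀ u v : V, G.Adj u v → ¬(Active u ∧ Active v) →
      x' s(u, v) = x s(u, v)) :
    ∀ v : V, ∑ e ∈ G.edgeFinset.filter (fun e => v ∈ e), x' e ≤ w v := by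
  intro v
  by_cases hv : Active v
  · have hle : ∀ e ∈ G.edgeFinset.filter (fun e => v ∈ e), x' e ≤ x e / (1 - ε) :=
      fun e he => update_le_div hε.le hε'
        (fun e he => hx_nonneg e (SimpleGraph.mem_edgeFinset.mpr he)) hx'_active hx'_frozen
        (SimpleGraph.mem_edgeFinset.mp (mem_filter.mp he).1)
    calc ∑ e ∈ G.edgeFinset.filter (fun e => v ∈ e), x' e
        ≤ (∑ e ∈ G.edgeFinset.filter (fun e => v ∈ e), x e) / (1 - ε) := by
          rw [sum_div]; exact sum_le_sum hle
      _ ≤ w v := div_one_sub_le_of_le_mul hε.le hε' (hT v).2 (hw v).le (hactive v hv).le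
  · calc ∑ e ∈ G.edgeFinset.filter (fun e => v ∈ e), x' e
        = ∑ e ∈ G.edgeFinset.filter (fun e => v ∈ e), x e := sum_congr rfl fun e he =>
          update_eq_of_not_active hx'_frozen hv
            (SimpleGraph.mem_edgeFinset.mp (mem_filter.mp he).1) (mem_filter.mp he).2
      _ ≤ w v := hx_valid v
end

section
/- Let G=(V,E) be a finite graph with positive vertex weights w and x : E → ℝ≥0 satisfying ∑_{e∋u} x_e ≤ (1+δ)·w(u) for every vertex u, where δ ≥ 0. Suppose C is a vertex cover such that each v ∈ C satisfies ∑_{e∋v} x_e ≥ (1−σ)·w(v) with 0 ≤ σ < 1. Then w(C) ≤ (2(1+δ)/(1−σ))·OPT, where OPT is the minimum weight of a vertex cover. -/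
/-!
Scaling `x` by `1/(1+δ)` gives a fractional matching, so by weak LP duality its total weight is
at most `(1+δ)` times the weight of any vertex cover `C'`: every edge meets `C'` at least once.
On the other side every edge has at most two endpoints in `C`, so summing the tightness
condition over `C` counts each `x e` at most twice: `(1-σ)·w(C) ≤ 2 ∑ₑ xₑ`.
-/

open Finset

section Incidence

variable {V : Type*} [DecidableEq V]

theorem card_filter_mem_sym2_le_two (S : Finset V) (e : Sym2 V) : #{v ∈ S | v ∈ e} ≤ 2 := by
  have hsub : {v ∈ S | v ∈ e} ⊆ e.toFinset := fun v hv => Sym2.mem_toFinset.mpr (mem_filter.mp hv).2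
  have htwo : #e.toFinset ≤ 2 := by
    rw [Sym2.card_toFinset]
    split_ifs <;> omega
  exact (card_le_card hsub).trans htwo

theorem sum_sum_incident_eq_sum_card_mul (S : Finset V) (E : Finset (Sym2 V)) (x : Sym2 V → ℝ) :
    ∑ v ∈ S, ∑ e ∈ E with v ∈ e, x e = ∑ e ∈ E, (#{v ∈ S | v ∈ e} : ℝ) * x e := by
  simp_rw [sum_filter]
  rw [sum_comm]
  refine sum_congr rfl fun e _ => ?_
  rw [← sum_filter, sum_const, nsmul_eq_mul]

theorem sum_sum_incident_le_two_mul_sum (S : Finset V) (E : Finset (Sym2 V)) (x : Sym2 V → ℝ)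
    (hx : ∀ e ∈ E, 0 ≤ x e) :
    ∑ v ∈ S, ∑ e ∈ E with v ∈ e, x e ≤ 2 * ∑ e ∈ E, x e := by
  rw [sum_sum_incident_eq_sum_card_mul, mul_sum]
  refine sum_le_sum fun e he => mul_le_mul_of_nonneg_right ?_ (hx e he)
  exact_mod_cast card_filter_mem_sym2_le_two S e

theorem sum_le_sum_sum_incident_of_cover (S : Finset V) (E : Finset (Sym2 V)) (x : Sym2 V → ℝ)
    (hx : ∀ e ∈ E, 0 ≤ x e) (hS : ∀ e ∈ E, ∃ v ∈ S, v ∈ e) :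
    ∑ e ∈ E, x e ≤ ∑ v ∈ S, ∑ e ∈ E with v ∈ e, x e := by
  rw [sum_sum_incident_eq_sum_card_mul]
  refine sum_le_sum fun e he => le_mul_of_one_le_left (hx e he) ?_
  obtain ⟨v, hvS, hve⟩ := hS e he
  exact_mod_cast card_pos.mpr ⟨v, mem_filter.mpr ⟨hvS, hve⟩⟩

end Incidence

theorem stmt_12_general {V : Type*} [Fintype V] [DecidableEq V]
    (G : SimpleGraph V) [DecidableRel G.Adj]
    (w : V → ℝ)
    (δ σ : ℝ) (hσ1 : σ < 1)
    (x : Sym2 V → ℝ)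
    (hx_nonneg : ∀ e ∈ G.edgeFinset, 0 ≤ x e)
    (hx_approx : ∀ u : V,
      ∑ e ∈ G.edgeFinset.filter (fun e => u ∈ e), x e ≤ (1 + δ) * w u)
    (C : Finset V)
    (hC_tight : ∀ v ∈ C,
      (1 - σ) * w v ≤ ∑ e ∈ G.edgeFinset.filter (fun e => v ∈ e), x e) :
    ∀ C' : Finset V, (∀ e ∈ G.edgeFinset, ∃ v ∈ C', v ∈ e) →
      ∑ v ∈ C, w v ≤ (2 * (1 + δ) / (1 - σ)) * ∑ v ∈ C', w v := by
  intro C' hC'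
  have hC_le : (1 - σ) * ∑ v ∈ C, w v ≤ 2 * ∑ e ∈ G.edgeFinset, x e :=
    calc (1 - σ) * ∑ v ∈ C, w v = ∑ v ∈ C, (1 - σ) * w v := mul_sum _ _ _
      _ ≤ ∑ v ∈ C, ∑ e ∈ G.edgeFinset with v ∈ e, x e := sum_le_sum hC_tight
      _ ≤ 2 * ∑ e ∈ G.edgeFinset, x e := sum_sum_incident_le_two_mul_sum _ _ _ hx_nonneg
  have hweak_duality : ∑ e ∈ G.edgeFinset, x e ≤ (1 + δ) * ∑ v ∈ C', w v :=
    calc ∑ e ∈ G.edgeFinset, x e ≤ ∑ v ∈ C', ∑ e ∈ G.edgeFinset with v ∈ e, x e :=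
          sum_le_sum_sum_incident_of_cover _ _ _ hx_nonneg hC'
      _ ≤ ∑ v ∈ C', (1 + δ) * w v := sum_le_sum fun v _ => hx_approx v
      _ = (1 + δ) * ∑ v ∈ C', w v := (mul_sum _ _ _).symm
  rw [div_mul_eq_mul_div, le_div_iff₀ (sub_pos.mpr hσ1)]
  linarith

/-- Approximation via an approximately-valid fractional matching: if
`∑_{e∋u} x_e ≤ (1+δ)w(u)` for all `u`, and `C` is a vertex cover whose vertices
satisfy `∑_{e∋v} x_e ≥ (1-σ)w(v)`, then `w(C) ≤ (2(1+δ)/(1-σ))·OPT`. -/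
theorem stmt_12 {V : Type*} [Fintype V] [DecidableEq V]
    (G : SimpleGraph V) [DecidableRel G.Adj]
    (w : V → ℝ) (hw : ∀ v, 0 < w v)
    (δ σ : ℝ) (hδ : 0 ≤ δ) (hσ0 : 0 ≤ σ) (hσ1 : σ < 1)
    (x : Sym2 V → ℝ)
    (hx_nonneg : ∀ e ∈ G.edgeFinset, 0 ≤ x e)
    (hx_approx : ∀ u : V,
      ∑ e ∈ G.edgeFinset.filter (fun e => u ∈ e), x e ≤ (1 + δ) * w u)
    (C : Finset V)
    (hC_cover : ∀ e ∈ G.edgeFinset, ∃ v ∈ C, v ∈ e)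
    (hC_tight : ∀ v ∈ C,
      (1 - σ) * w v ≤ ∑ e ∈ G.edgeFinset.filter (fun e => v ∈ e), x e) :
    ∀ C' : Finset V, (∀ e ∈ G.edgeFinset, ∃ v ∈ C', v ∈ e) →
      ∑ v ∈ C, w v ≤ (2 * (1 + δ) / (1 - σ)) * ∑ v ∈ C', w v :=
  stmt_12_general G w δ σ hσ1 x hx_nonneg hx_approx C hC_tight
end
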